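/- arXiv:1402.1542 — 4 statements merged into one kernel-verified Lean document; each statement's English description precedes it below -/
import Mathlib

section
/- Let C, D be 2×2 complex matrices such that CD* is self-adjoint and det(CC* + DD*) ≠ 0. Let M be a 2×2 complex matrix with positive definite imaginary part, i.e., (M − M*)/(2i) > 0. Then the matrix DM − C is invertible. -/
/-!
If `(D M - C)ᴴ v = 0` with `v ≠ 0`, put `u = Dᴴ v`, so that `Mᴴ u = Cᴴ v`. Then
`⟪u, Mᴴ u⟫ = vᴴ (D Cᴴ) v` is real because `C Dᴴ` is self-adjoint, whereas `Im ⟪u, M u⟫ > 0`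
for `u ≠ 0`. Hence `Dᴴ v = Cᴴ v = 0`, and `v` lies in the kernel of `C Cᴴ + D Dᴴ`.
-/

open Complex Matrix
open scoped ComplexOrder

namespace Matrix

section StarRing

variable {m n α : Type*} [Fintype m] [Fintype n] [CommSemiring α] [StarRing α]

lemma star_dotProduct_conjTranspose_mulVec (M : Matrix n n α) (u : n → α) :
    star u ⬝ᵥ Mᴴ *ᵥ u = star (star u ⬝ᵥ M *ᵥ u) := by
  rw [star_dotProduct, star_mulVec, dotProduct_mulVec, conjTranspose_conjTranspose]

lemma star_conjTranspose_mulVec_dotProduct (C D : Matrix m n α) (v : m → α) :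
    star (Dᴴ *ᵥ v) ⬝ᵥ Cᴴ *ᵥ v = star v ⬝ᵥ (D * Cᴴ) *ᵥ v := by
  rw [star_mulVec, conjTranspose_conjTranspose, ← dotProduct_mulVec, mulVec_mulVec]

end StarRing

variable {n : Type*} [Fintype n]

lemma star_dotProduct_imPart_mulVec (M : Matrix n n ℂ) (u : n → ℂ) :
    star u ⬝ᵥ (((2 : ℂ) * I)⁻¹ • (M - Mᴴ)) *ᵥ u = ((star u ⬝ᵥ M *ᵥ u).im : ℂ) := by
  rw [smul_mulVec, dotProduct_smul, sub_mulVec, dotProduct_sub,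
    star_dotProduct_conjTranspose_mulVec, smul_eq_mul]
  apply Complex.ext <;> simp; ring

lemma im_star_dotProduct_mulVec_pos {M : Matrix n n ℂ}
    (hM : (((2 : ℂ) * I)⁻¹ • (M - Mᴴ)).PosDef) {u : n → ℂ} (hu : u ≠ 0) :
    0 < (star u ⬝ᵥ M *ᵥ u).im := by
  have hpos := hM.dotProduct_mulVec_pos hu
  rwa [star_dotProduct_imPart_mulVec, zero_lt_real] at hpos

theorem isUnit_mul_sub_of_posDef_imPart [DecidableEq n] {C D M : Matrix n n ℂ}
    (hCD : (C * Dᴴ).IsHermitian) (hdet : (C * Cᴴ + D * Dᴴ).det ≠ 0)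
    (hM : (((2 : ℂ) * I)⁻¹ • (M - Mᴴ)).PosDef) :
    IsUnit (D * M - C) := by
  rw [isUnit_iff_isUnit_det, isUnit_iff_ne_zero]
  intro hsing
  obtain ⟨v, hv0, hv⟩ : ∃ v ≠ 0, (D * M - C)ᴴ *ᵥ v = 0 := by
    rw [exists_mulVec_eq_zero_iff, det_conjTranspose, hsing, star_zero]
  have hMu : Mᴴ *ᵥ (Dᴴ *ᵥ v) = Cᴴ *ᵥ v := by
    rwa [conjTranspose_sub, conjTranspose_mul, sub_mulVec, sub_eq_zero, ← mulVec_mulVec] at hv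
  have hDv : Dᴴ *ᵥ v = 0 := by
    by_contra hne
    have hDC : (D * Cᴴ).IsHermitian := by
      simpa only [conjTranspose_mul, conjTranspose_conjTranspose] using hCD.conjTranspose
    have hreal := hDC.im_star_dotProduct_mulVec_self v
    rw [← star_conjTranspose_mulVec_dotProduct, ← hMu, star_dotProduct_conjTranspose_mulVec,
      RCLike.star_def, RCLike.conj_im, neg_eq_zero] at hreal
    exact (im_star_dotProduct_mulVec_pos hM hne).ne' hreal
  have hCv : Cᴴ *ᵥ v = 0 := by rw [← hMu, hDv, mulVec_zero]
  refine hdet (exists_mulVec_eq_zero_iff.mp ⟨v, hv0, ?_⟩)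
  rw [add_mulVec, ← mulVec_mulVec, ← mulVec_mulVec, hCv, hDv, mulVec_zero, mulVec_zero, add_zero]

end Matrix

/-- If `(C,D)` is an admissible pair (`CD*` self-adjoint and
`det(CC* + DD*) ≠ 0`) and `M` is a `2×2` matrix with positive definite imaginary
part `(M - M*)/(2i)`, then `DM - C` is invertible. -/
theorem stmt5 (C D M : Matrix (Fin 2) (Fin 2) ℂ)
    (hCD : (C * Dᴴ).IsHermitian)
    (hdet : (C * Cᴴ + D * Dᴴ).det ≠ 0)
    (hM : (((2 : ℂ) * I)⁻¹ • (M - Mᴴ)).PosDef) :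
    IsUnit (D * M - C) :=
  isUnit_mul_sub_of_posDef_imPart hCD hdet hM
end

section
/- Let (C,D) be 2×2 complex matrices with CD* self-adjoint and det(CC*+DD*) ≠ 0, and let M(z̄) = M(z)* be 2×2 matrices such that DM(z) − C is invertible. Then [(DM(z̄) − C)⁻¹ D]* = (DM(z) − C)⁻¹ D. -/
open Complex Matrix

/-- For an admissible pair `(C,D)` (`CD*` self-adjoint,
`det(CC* + DD*) ≠ 0`) and matrices `M̃ = M*` with both `DM - C` and `DM̃ - C`
invertible, one has `[(DM̃ - C)⁻¹ D]* = (DM - C)⁻¹ D`. -/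
theorem stmt6 (C D M : Matrix (Fin 2) (Fin 2) ℂ)
    (hCD : (C * Dᴴ).IsHermitian)
    (hdet : (C * Cᴴ + D * Dᴴ).det ≠ 0)
    (h1 : IsUnit (D * M - C))
    (h2 : IsUnit (D * Mᴴ - C)) :
    ((D * Mᴴ - C)⁻¹ * D)ᴴ = (D * M - C)⁻¹ * D := by
  have hC : C * Dᴴ = D * Cᴴ := by
    have := hCD.eq
    rw [conjTranspose_mul, conjTranspose_conjTranspose] at this; exact this.symm
  have hT : (D * Mᴴ - C)ᴴ = M * Dᴴ - Cᴴ := by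
    rw [conjTranspose_sub, conjTranspose_mul, conjTranspose_conjTranspose]
  have h3 : IsUnit (M * Dᴴ - Cᴴ) := by
    rw [← hT]
    rw [Matrix.isUnit_iff_isUnit_det] at h2 ⊢
    rwa [Matrix.det_conjTranspose, isUnit_iff_ne_zero, star_ne_zero,
      ← isUnit_iff_ne_zero]
  have key : (D * M - C) * Dᴴ = D * (M * Dᴴ - Cᴴ) := by
    rw [sub_mul, mul_sub, mul_assoc, hC]
  have key2 : Dᴴ * (M * Dᴴ - Cᴴ)⁻¹ = (D * M - C)⁻¹ * D := by
    have h1' := (Matrix.isUnit_iff_isUnit_det _).mp h1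
    have h3' := (Matrix.isUnit_iff_isUnit_det _).mp h3
    calc Dᴴ * (M * Dᴴ - Cᴴ)⁻¹
        = (D * M - C)⁻¹ * ((D * M - C) * Dᴴ) * (M * Dᴴ - Cᴴ)⁻¹ := by
          rw [← mul_assoc, Matrix.nonsing_inv_mul _ h1', one_mul]
      _ = (D * M - C)⁻¹ * (D * ((M * Dᴴ - Cᴴ) * (M * Dᴴ - Cᴴ)⁻¹)) := by
          rw [key]; rw [mul_assoc, mul_assoc]
      _ = (D * M - C)⁻¹ * D := by
          rw [Matrix.mul_nonsing_inv _ h3', mul_one]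
  rw [conjTranspose_mul, conjTranspose_nonsing_inv, hT, key2]
end

section
/- Let B be a positive definite 2×2 Hermitian matrix, Λ a Hermitian 2×2 matrix, and set M = iB². Then M − Λ is invertible and the matrix 1 + T, with T := −2iB(M − Λ)⁻¹B, is unitary. -/
open Complex Matrix
open scoped ComplexOrder

/-!
Put `A = M - Λ`. Its skew-Hermitian part is `A - Aᴴ = 2iB²`, so for `v ≠ 0` the imaginary part
of `v* A v` is `v* B² v > 0`; hence `A` is invertible. Then `Tᴴ = 2iB(Aᴴ)⁻¹B`, and
`T Tᴴ = 4 B A⁻¹ B² (Aᴴ)⁻¹ B = -2i B A⁻¹ (A - Aᴴ) (Aᴴ)⁻¹ B = -2i B ((Aᴴ)⁻¹ - A⁻¹) B = -(T + Tᴴ)`,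
which is `(1 + T)(1 + T)ᴴ = 1`.
-/

namespace Matrix

variable {n : Type*}

theorem I_smul_sub_sub_conjTranspose {P H : Matrix n n ℂ} (hP : P.IsHermitian)
    (hH : H.IsHermitian) : I • P - H - (I • P - H)ᴴ = (2 * I) • P := by
  rw [conjTranspose_sub, conjTranspose_smul, hP.eq, hH.eq, star_def, conj_I]
  module

variable [Fintype n] [DecidableEq n]

theorem isUnit_I_smul_sub_of_posDef {P H : Matrix n n ℂ} (hP : P.PosDef) (hH : H.IsHermitian) :
    IsUnit (I • P - H) := by
  rw [isUnit_iff_isUnit_det, isUnit_iff_ne_zero, Ne, ← exists_mulVec_eq_zero_iff]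
  rintro ⟨v, hv, hker⟩
  have hquad : I • (star v ⬝ᵥ P *ᵥ v) - star v ⬝ᵥ H *ᵥ v = 0 := by
    rw [← dotProduct_smul, ← dotProduct_sub, ← smul_mulVec, ← sub_mulVec, hker, dotProduct_zero]
  have hPv := (Complex.pos_iff.mp (hP.dotProduct_mulVec_pos hv)).1
  have hHv : (star v ⬝ᵥ H *ᵥ v).im = 0 := hH.im_star_dotProduct_mulVec_self v
  have hre := congrArg Complex.im hquad
  simp only [smul_eq_mul, sub_im, mul_im, I_re, I_im, hHv, zero_im, zero_mul, one_mul, zero_add,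
    sub_zero] at hre
  exact hPv.ne' hre

theorem one_add_smul_mul_inv_mul_mem_unitaryGroup {A B : Matrix n n ℂ} (hA : IsUnit A)
    (hB : B.IsHermitian) (hskew : A - Aᴴ = (2 * I) • (B * B)) :
    1 + (-2 * I) • (B * A⁻¹ * B) ∈ unitaryGroup n ℂ := by
  have hdet : IsUnit A.det := (isUnit_iff_isUnit_det A).mp hA
  have hdetH : IsUnit Aᴴ.det := by rw [det_conjTranspose]; exact hdet.star
  set T := (-2 * I) • (B * A⁻¹ * B) with hT
  have hTH : Tᴴ = (2 * I) • (B * Aᴴ⁻¹ * B) := by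
    rw [hT, conjTranspose_smul, conjTranspose_mul, conjTranspose_mul, hB.eq,
      conjTranspose_nonsing_inv, mul_assoc]
    congr 1
    simp
  have hcross : (2 * I) • (B * A⁻¹ * B * (B * Aᴴ⁻¹ * B)) = B * Aᴴ⁻¹ * B - B * A⁻¹ * B :=
    calc _ = B * (A⁻¹ * ((2 * I) • (B * B)) * Aᴴ⁻¹) * B := by
          simp only [Matrix.mul_smul, Matrix.smul_mul, Matrix.mul_assoc]
      _ = B * (A⁻¹ * A * Aᴴ⁻¹ - A⁻¹ * (Aᴴ * Aᴴ⁻¹)) * B := by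
          rw [← hskew, mul_sub, sub_mul, Matrix.mul_assoc A⁻¹ Aᴴ]
      _ = _ := by
          rw [nonsing_inv_mul A hdet, mul_nonsing_inv _ hdetH, one_mul, mul_one, mul_sub, sub_mul]
  have hTT : T * Tᴴ = -(T + Tᴴ) := by
    rw [hTH, hT, smul_mul_smul_comm, mul_smul, hcross]
    module
  rw [mem_unitaryGroup_iff, star_eq_conjTranspose, conjTranspose_add, conjTranspose_one]
  calc (1 + T) * (1 + Tᴴ) = 1 + (T + Tᴴ + T * Tᴴ) := by noncomm_ring
    _ = 1 := by rw [hTT, add_neg_cancel, add_zero]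

end Matrix

/-- Let `B` be positive definite Hermitian, `Λ` Hermitian, and
`M = iB²`. Then `M - Λ` is invertible, and `1 + T` with `T = -2iB(M - Λ)⁻¹B`
is unitary. -/
theorem stmt8 (B Λ : Matrix (Fin 2) (Fin 2) ℂ)
    (hB : B.PosDef) (hΛ : Λ.IsHermitian)
    (M : Matrix (Fin 2) (Fin 2) ℂ) (hM : M = I • (B * B))
    (T : Matrix (Fin 2) (Fin 2) ℂ)
    (hT : T = (-2 * I) • (B * (M - Λ)⁻¹ * B)) :
    IsUnit (M - Λ) ∧
    (1 + T) * (1 + T)ᴴ = 1 ∧ (1 + T)ᴴ * (1 + T) = 1 := by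
  subst hM hT
  have hBB : (B * B).PosDef := by
    simpa only [hB.isHermitian.eq] using
      PosDef.conjTranspose_mul_self B (mulVec_injective_iff_isUnit.mpr hB.isUnit)
  have hU := isUnit_I_smul_sub_of_posDef hBB hΛ
  have hunitary := one_add_smul_mul_inv_mul_mem_unitaryGroup hU hB.isHermitian
    (I_smul_sub_sub_conjTranspose hBB.isHermitian hΛ)
  exact ⟨hU, Unitary.mul_star_self_of_mem hunitary, Unitary.star_mul_self_of_mem hunitary⟩
end

section
/- Let p₁, p₂ ∈ ℂ with |p₁|² + |p₂|² = 1 and ℓ ∈ ℝ. Define d(t) = |p₂|² t − |p₁|²/t + 2ℓ on (0,∞). Then d has exactly one zero in (0,∞) if (p₁p₂ ≠ 0), or (p₂ = 0 and ℓ > 0), or (p₁ = 0 and ℓ < 0); in all other cases d has no zero in (0,∞). -/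
/-!
With `a = |p₂|²`, `b = |p₁|²`, `c = 2ℓ`, the normalization rules out `a = b = 0`, so
`t ↦ a t - b/t + c` is strictly increasing on `(0,∞)` and has at most one zero there. If
`a, b > 0` it runs from `-∞` to `+∞` and a zero exists (the positive root of `a t² + c t - b`);
if `a = 0` it is `c - b/t`, which vanishes somewhere iff `c > 0`; if `b = 0` it is `a t + c`,
which vanishes somewhere iff `c < 0`.
-/

open Set

section

variable {a b c : ℝ}

theorem strictMonoOn_mul_sub_div_add (ha : 0 ≤ a) (hb : 0 ≤ b) (hab : 0 < a ∨ 0 < b) :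
    StrictMonoOn (fun t => a * t - b / t + c) (Ioi 0) := by
  intro s (hs : 0 < s) t _ hst
  have hlin : a * s ≤ a * t := mul_le_mul_of_nonneg_left hst.le ha
  have hinv : b / t ≤ b / s := div_le_div_of_nonneg_left hb hs hst.le
  dsimp only
  rcases hab with ha' | hb'
  · linarith [mul_lt_mul_of_pos_left hst ha']
  · linarith [div_lt_div_of_pos_left hb' hs hst]

theorem exists_pos_mul_sub_div_add_eq_zero (ha : 0 < a) (hb : 0 < b) :
    ∃ t, 0 < t ∧ a * t - b / t + c = 0 := by
  set s := √(c ^ 2 + 4 * a * b)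
  have hs : s ^ 2 = c ^ 2 + 4 * a * b := Real.sq_sqrt (by positivity)
  have hcs : c < s := by
    refine lt_of_le_of_lt (le_abs_self c) (abs_lt_of_sq_lt_sq ?_ (Real.sqrt_nonneg _))
    nlinarith
  have hcs' : 0 < -c + s := by linarith
  refine ⟨(-c + s) / (2 * a), by positivity, ?_⟩
  field_simp
  linear_combination hs

theorem exists_pos_mul_sub_div_add_eq_zero_iff (ha : 0 ≤ a) (hb : 0 ≤ b)
    (hab : 0 < a ∨ 0 < b) :
    (∃ t, 0 < t ∧ a * t - b / t + c = 0) ↔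
      (a ≠ 0 ∧ b ≠ 0) ∨ (a = 0 ∧ 0 < c) ∨ (b = 0 ∧ c < 0) := by
  constructor
  · rintro ⟨t, ht, hzero⟩
    rcases ha.eq_or_lt with rfl | ha'
    · have hb' : 0 < b := hab.resolve_left (lt_irrefl 0)
      right; left
      exact ⟨rfl, by have := div_pos hb' ht; linarith⟩
    rcases hb.eq_or_lt with rfl | hb'
    · right; right
      rw [zero_div] at hzero
      exact ⟨rfl, by have := mul_pos ha' ht; linarith⟩
    exact Or.inl ⟨ha'.ne', hb'.ne'⟩
  · rintro (⟨ha', hb'⟩ | ⟨rfl, hc⟩ | ⟨rfl, hc⟩)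
    · exact exists_pos_mul_sub_div_add_eq_zero (ha.lt_of_ne' ha') (hb.lt_of_ne' hb')
    · have hb' : 0 < b := hab.resolve_left (lt_irrefl 0)
      exact ⟨b / c, div_pos hb' hc, by field_simp; ring⟩
    · have ha' : 0 < a := hab.resolve_right (lt_irrefl 0)
      exact ⟨-c / a, div_pos (neg_pos.2 hc) ha', by field_simp; ring⟩

end

/-- Let `p₁, p₂ ∈ ℂ` with `|p₁|² + |p₂|² = 1` and `ℓ ∈ ℝ`, and set
`d(t) = |p₂|² t - |p₁|²/t + 2ℓ` on `(0,∞)`. Then `d` has exactly one zero in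
`(0,∞)` if `p₁p₂ ≠ 0`, or `p₂ = 0` and `ℓ > 0`, or `p₁ = 0` and `ℓ < 0`; in all
other cases `d` has no zero in `(0,∞)`. -/
theorem stmt11 (p1 p2 : ℂ) (hp : ‖p1‖ ^ 2 + ‖p2‖ ^ 2 = 1) (l : ℝ)
    (d : ℝ → ℝ)
    (hd : ∀ t : ℝ, d t = ‖p2‖ ^ 2 * t - ‖p1‖ ^ 2 / t + 2 * l) :
    ((p1 * p2 ≠ 0 ∨ (p2 = 0 ∧ 0 < l) ∨ (p1 = 0 ∧ l < 0)) →
      ∃! t : ℝ, 0 < t ∧ d t = 0) ∧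
    (¬(p1 * p2 ≠ 0 ∨ (p2 = 0 ∧ 0 < l) ∨ (p1 = 0 ∧ l < 0)) →
      ∀ t : ℝ, 0 < t → d t ≠ 0) := by
  obtain rfl : d = fun t => ‖p2‖ ^ 2 * t - ‖p1‖ ^ 2 / t + 2 * l := funext hd
  have ha : 0 ≤ ‖p2‖ ^ 2 := sq_nonneg _
  have hb : 0 ≤ ‖p1‖ ^ 2 := sq_nonneg _
  have hab : 0 < ‖p2‖ ^ 2 ∨ 0 < ‖p1‖ ^ 2 := by
    by_contra! h
    linarith [h.1.antisymm ha, h.2.antisymm hb]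
  have hcond : (p1 * p2 ≠ 0 ∨ (p2 = 0 ∧ 0 < l) ∨ (p1 = 0 ∧ l < 0)) ↔
      (‖p2‖ ^ 2 ≠ 0 ∧ ‖p1‖ ^ 2 ≠ 0) ∨ (‖p2‖ ^ 2 = 0 ∧ 0 < 2 * l) ∨
        (‖p1‖ ^ 2 = 0 ∧ 2 * l < 0) := by
    simp only [mul_ne_zero_iff, ne_eq, pow_eq_zero_iff two_ne_zero, norm_eq_zero,
      and_comm (a := ¬p1 = 0)]
    grind
  rw [hcond, ← exists_pos_mul_sub_div_add_eq_zero_iff ha hb hab]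
  refine ⟨fun ⟨t, ht⟩ => ⟨t, ht, fun s hs => ?_⟩, fun h t ht hdt => h ⟨t, ht, hdt⟩⟩
  exact (strictMonoOn_mul_sub_div_add ha hb hab).injOn hs.1 ht.1 (hs.2.trans ht.2.symm)
end
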